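/- For every n ≥ 0, a_{5,0}(4n+2) = 0; that is, no 5-core partition of an integer congruent to 2 modulo 4 has srank ≡ 0 (mod 4). -/

import Mathlib

open scoped Classical

namespace AndrewsStanley

/-- `O(π)`: the number of odd parts of the partition `π`. -/
def numOdd {n : ℕ} (π : n.Partition) : ℕ := (π.parts.filter (fun j => Odd j)).card

/-- The length of the `i`-th column (`i ≥ 1`) of the Young diagram of `π`,
i.e. the `i`-th part of the conjugate partition `π'`. -/
def colLen {n : ℕ} (π : n.Partition) (i : ℕ) : ℕ := (π.parts.filter (fun j => i ≤ j)).card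

/-- `O(π')`: the number of odd parts of the conjugate partition `π'`.
(All parts of `π` are at most `n`, so all columns of the diagram have index in `[1, n]`.) -/
def numOddConj {n : ℕ} (π : n.Partition) : ℕ :=
  ((Finset.Icc 1 n).filter (fun i => Odd (colLen π i))).card

/-- Stanley's statistic `srank(π) = O(π) - O(π')`. -/
def srank {n : ℕ} (π : n.Partition) : ℤ := (numOdd π : ℤ) - (numOddConj π : ℤ)

/-- A partition has no repeated even parts. -/
def NoRepEven {n : ℕ} (π : n.Partition) : Prop := ∀ j : ℕ, Even j → π.parts.count j ≤ 1

/-- `p_i(N)`: the number of partitions of `N` with `srank ≡ i (mod 4)`. -/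
noncomputable def pMod (i : ℤ) (N : ℕ) : ℕ :=
  (Finset.univ.filter (fun π : N.Partition => srank π % 4 = i)).card

/-- The Andrews–Garvan crank, defined on a multiset of parts: the largest part if there
are no ones, and otherwise the number of parts larger than the number of ones minus
the number of ones. -/
def mcrank (s : Multiset ℕ) : ℤ :=
  if s.count 1 = 0 then (s.sup : ℤ)
  else ((s.filter (fun j => s.count 1 < j)).card : ℤ) - (s.count 1 : ℤ)

/-- The parts of the partition `π₁` in which `j` occurs `⌊f_{2j}(π)/2⌋` times. -/
def halfEvenParts {n : ℕ} (π : n.Partition) : Multiset ℕ :=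
  (Finset.Icc 1 n).val.bind (fun j => Multiset.replicate (π.parts.count (2 * j) / 2) j)

/-- The second largest part `λ₂` of a partition (counted with multiplicity; `0` if
there are fewer than two parts). -/
def secondPart {n : ℕ} (π : n.Partition) : ℕ := (π.parts.erase π.parts.sup).sup

/-- Partitions of type B: either `π = (3,1)`, or `|π| ≠ 4`, `λ₁ - λ₂ ≥ 2`,
`λ'₁ - λ'₂ ≥ 2`, `λ₁ - 2` and `λ₂` are not identical even integers, and `π` has no
repeated even parts. -/
def TypeB {n : ℕ} (π : n.Partition) : Prop :=
  π.parts = {3, 1} ∨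
    (n ≠ 4 ∧ secondPart π + 2 ≤ π.parts.sup ∧ colLen π 2 + 2 ≤ colLen π 1 ∧
      ¬(π.parts.sup = secondPart π + 2 ∧ Even (secondPart π)) ∧ NoRepEven π)

/-- `stcrank(π) = crank(π₁) + srank(π)/2 + Ψ(π)` where `Ψ(π) = 1` iff `π` is of type B. -/
noncomputable def stcrank {n : ℕ} (π : n.Partition) : ℤ :=
  mcrank (halfEvenParts π) + srank π / 2 + (if TypeB π then 1 else 0)

/-- `P_i(k, m, N)`: the number of partitions of `N` with `srank ≡ i (mod 4)` and
`stcrank ≡ k (mod m)`. -/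
noncomputable def Pcount (i k : ℤ) (m : ℕ) (N : ℕ) : ℕ :=
  (Finset.univ.filter
    (fun π : N.Partition => srank π % 4 = i ∧ stcrank π % (m : ℤ) = k)).card

/-- The parts of `π` listed in (weakly) decreasing order. -/
def partsList {n : ℕ} (π : n.Partition) : List ℕ := (π.parts.sort (· ≤ ·)).reverse

/-- `λ_a`, the length of the `a`-th row (`a ≥ 1`) of the Young diagram of `π`. -/
def rowLen {n : ℕ} (π : n.Partition) (a : ℕ) : ℕ := (partsList π).getD (a - 1) 0

/-- The hook length of the cell in row `a` and column `b` (both `1`-indexed). -/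
def hookLen {n : ℕ} (π : n.Partition) (a b : ℕ) : ℕ :=
  (rowLen π a - b) + (colLen π b - a) + 1

/-- A partition is a `t`-core if no hook length of its Young diagram equals `t`. -/
def IsCore (t : ℕ) {n : ℕ} (π : n.Partition) : Prop :=
  ∀ a b : ℕ, 1 ≤ a → 1 ≤ b → b ≤ rowLen π a → hookLen π a b ≠ t

/-- `a_t(N)`: the number of partitions of `N` that are `t`-cores. -/
noncomputable def coreCount (t N : ℕ) : ℕ :=
  (Finset.univ.filter (fun π : N.Partition => IsCore t π)).card

/-- `r_j(π)`: the number of cells in row `a`, column `b` (1-indexed) of the Young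
diagram of `π` with `b - a ≡ j (mod 5)`. -/
noncomputable def rres {n : ℕ} (π : n.Partition) (j : ℕ) : ℕ :=
  ∑ a ∈ Finset.Icc 1 (Multiset.card π.parts),
    ((Finset.Icc 1 (rowLen π a)).filter (fun b => ((b : ℤ) - (a : ℤ)) % 5 = (j : ℤ))).card

/-- The Garvan–Kim–Stanton 5-core crank (as a representative modulo 5):
`d₅(π) = 2 + 2r₀(π) + r₁(π) - r₃(π) - 2r₄(π)`. -/
noncomputable def d5 {n : ℕ} (π : n.Partition) : ℤ :=
  2 + 2 * (rres π 0 : ℤ) + (rres π 1 : ℤ) - (rres π 3 : ℤ) - 2 * (rres π 4 : ℤ)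

/-- `a_{5,i}(N)`: the number of 5-core partitions of `N` with `srank ≡ i (mod 4)`. -/
noncomputable def a5srank (i : ℤ) (N : ℕ) : ℕ :=
  (Finset.univ.filter (fun π : N.Partition => IsCore 5 π ∧ srank π % 4 = i)).card

/-- The infinite product `∏_{j≥0} f j` of power series, in the situation (as for all
the products occurring here) where the factor `f j` is of the form `1 + (terms of
degree > j)`, so that the coefficient of `q^N` in the partial products stabilizes:
it is the corresponding coefficient in `∏_{j ≤ N} f j`. -/
noncomputable def infProd {R : Type*} [CommRing R] (f : ℕ → PowerSeries R) :
    PowerSeries R :=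
  PowerSeries.mk fun N => PowerSeries.coeff N (∏ j ∈ Finset.range (N + 1), f j)

/-!
Write `λ_a` for the rows of `π` and `β_a = λ_a + K - a` (`1 ≤ a ≤ K = 2k`, `K ≥ |π|`) for its
beta-numbers. Summing `(-1)^(b+1) - (-1)^(a+1)` over the cells `(a, b)` of the diagram, once by
rows and once by columns, gives the exact formula `srank π = ∑_a ((-1)^a λ_a + (λ_a mod 2))`,
and hence `srank π ≡ |π| + k - E (mod 4)`, where `E` is the number of even beta-numbers.
The beta-set of a 5-core is closed under `v ↦ v - 5`; as 5 is odd, this map sends the even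
beta-numbers `≥ 5` injectively to odd ones and vice versa, so `E - k ∈ {-1, 0, 1}`. For
`|π| ≡ 2 (mod 4)` this leaves `srank π ≡ 2 - (E - k) ≢ 0 (mod 4)`.
-/

open Finset

theorem card_filter_le_card_filter_of_sub_mem {m : ℕ} {F : Finset ℕ}
    (hF : ∀ v ∈ F, m ≤ v → v - m ∈ F) (p q : ℕ → Prop) [DecidablePred p] [DecidablePred q]
    (hpq : ∀ v, p (v + m) → q v) :
    #{v ∈ F | p v} ≤ #{v ∈ range m | p v} + #{v ∈ F | q v} := by
  calc #{v ∈ F | p v}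
      ≤ #({v ∈ range m | p v} ∪ {v ∈ F | q v}.image (· + m)) := by
        refine card_le_card fun v hv => ?_
        obtain ⟨hvF, hpv⟩ := mem_filter.mp hv
        rcases lt_or_ge v m with hvm | hvm
        · exact mem_union_left _ (mem_filter.mpr ⟨mem_range.mpr hvm, hpv⟩)
        · refine mem_union_right _ (mem_image.mpr ⟨v - m, mem_filter.mpr ⟨hF v hvF hvm, ?_⟩, ?_⟩)
          · exact hpq _ (by rwa [Nat.sub_add_cancel hvm])
          · exact Nat.sub_add_cancel hvm
    _ ≤ _ := (card_union_le _ _).trans (Nat.add_le_add_left card_image_le _)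

theorem card_filter_even_bounds_of_sub_five_mem {F : Finset ℕ}
    (hF : ∀ v ∈ F, 5 ≤ v → v - 5 ∈ F) :
    2 * #{v ∈ F | Even v} ≤ #F + 3 ∧ #F ≤ 2 * #{v ∈ F | Even v} + 2 := by
  have hsplit := card_filter_add_card_filter_not (s := F) (fun v => Even v)
  have heven := card_filter_le_card_filter_of_sub_mem hF (fun v => Even v) (fun v => ¬Even v)
    (fun v h => by simpa [parity_simps] using h)
  have hodd := card_filter_le_card_filter_of_sub_mem hF (fun v => ¬Even v) (fun v => Even v)
    (fun v h => by simpa [parity_simps] using h)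
  have h3 : #{v ∈ range 5 | Even v} = 3 := by decide
  have h2 : #{v ∈ range 5 | ¬Even v} = 2 := by decide
  omega

theorem _root_.Multiset.card_filter_eq_sum_map_ite {α : Type*} (s : Multiset α) (p : α → Prop)
    [DecidablePred p] :
    Multiset.card (s.filter p) = (s.map fun v => if p v then 1 else 0).sum := by
  induction s using Multiset.induction_on with
  | empty => simp
  | cons x s ih => by_cases h : p x <;> simp [h, ih, add_comm]

theorem sum_Icc_neg_one_pow_succ (L : ℕ) : ∑ b ∈ Icc 1 L, (-1 : ℤ) ^ (b + 1) = (L % 2 : ℕ) := by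
  induction L with
  | zero => simp
  | succ L ih =>
    rw [sum_Icc_succ_top (by omega), ih]
    rcases Nat.even_or_odd L with h | h
    · simp [h.add_one.add_one.neg_one_pow, Nat.even_iff.mp h, Nat.add_mod]
    · simp [h.add_one.add_one.neg_one_pow, Nat.odd_iff.mp h, Nat.add_mod]

theorem card_filter_even_Icc_two_mul (k : ℕ) : #{a ∈ Icc 1 (2 * k) | Even a} = k := by
  simp only [even_iff_two_dvd]
  rw [show Icc 1 (2 * k) = Ioc 0 (2 * k) from Icc_add_one_left_eq_Ioc 0 _,
    Nat.Ioc_filter_dvd_card_eq_div]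
  omega

theorem neg_one_pow_mul_add_mod_two_modEq {K a : ℕ} (hK : Even K) (ha : a ≤ K) (L : ℕ) :
    (-1 : ℤ) ^ a * L + (L % 2 : ℕ)
      ≡ L + (if Even a then 1 else 0) - (if Even (L + (K - a)) then 1 else 0) [ZMOD 4] := by
  have hβ : Even (L + (K - a)) ↔ (Even L ↔ Even a) := by
    rw [Nat.even_add, Nat.even_sub ha]
    simp [hK]
  rcases Nat.even_or_odd a with h | h
  · rw [h.neg_one_pow, if_pos h]
    simp only [hβ, h, iff_true, Int.ModEq, Nat.even_iff]
    split_ifs <;> omega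
  · rw [h.neg_one_pow, if_neg (Nat.not_even_iff_odd.mpr h)]
    simp only [hβ, Nat.not_even_iff_odd.mpr h, iff_false, Int.ModEq, Nat.even_iff]
    split_ifs <;> omega

section Diagram

variable {N : ℕ} (π : N.Partition)

theorem coe_partsList : (partsList π : Multiset ℕ) = π.parts := by
  rw [partsList, Multiset.coe_reverse, Multiset.sort_eq]

theorem length_partsList : (partsList π).length = Multiset.card π.parts := by
  rw [← Multiset.coe_card, coe_partsList]

theorem rowLen_antitone : Antitone (rowLen π) := by
  intro a a' h
  have hsorted : (partsList π).Pairwise (· ≥ ·) :=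
    List.pairwise_reverse.mpr (Multiset.pairwise_sort π.parts (· ≤ ·))
  unfold rowLen
  by_cases h' : a' - 1 < (partsList π).length
  · rw [List.getD_eq_getElem _ _ h', List.getD_eq_getElem _ _ (by omega)]
    rcases (show a - 1 ≤ a' - 1 by omega).eq_or_lt with he | hlt
    · simp only [he, le_refl]
    · exact List.pairwise_iff_getElem.mp hsorted _ _ _ h' hlt
  · rw [List.getD_eq_default _ _ (by omega)]
    exact Nat.zero_le _

theorem rowLen_eq_zero_of_card_lt {a : ℕ} (ha : Multiset.card π.parts < a) : rowLen π a = 0 :=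
  List.getD_eq_default _ _ (by rw [length_partsList]; omega)

theorem rowLen_le (a : ℕ) : rowLen π a ≤ N := by
  unfold rowLen
  by_cases h : a - 1 < (partsList π).length
  · rw [List.getD_eq_getElem _ _ h]
    refine Nat.Partition.le_of_mem_parts (p := π) ?_
    rw [← coe_partsList]
    exact List.getElem_mem h
  · rw [List.getD_eq_default _ _ (by omega)]
    exact Nat.zero_le _

theorem card_parts_le : Multiset.card π.parts ≤ N := by
  calc Multiset.card π.parts = (π.parts.map fun _ => 1).sum := by simp
  _ ≤ (π.parts.map id).sum := Multiset.sum_map_le_sum_map _ _ fun _ hx => π.parts_pos hx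
  _ = N := by simp [π.parts_sum]

theorem sum_Icc_rowLen {M : Type*} [AddCommMonoid M] {f : ℕ → M} (hf : f 0 = 0) {K : ℕ}
    (hK : Multiset.card π.parts ≤ K) :
    ∑ a ∈ Icc 1 K, f (rowLen π a) = (π.parts.map f).sum := by
  have key : ∀ (l : List ℕ) (K : ℕ), l.length ≤ K →
      ∑ i ∈ range K, f (l.getD i 0) = (l.map f).sum := by
    intro l
    induction l with
    | nil => simp [hf]
    | cons x xs ih =>
      rintro (_ | K) hK
      · simp at hK
      · rw [sum_range_succ', List.map_cons, List.sum_cons, add_comm]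
        simp only [List.getD_cons_succ, List.getD_cons_zero]
        rw [ih K (by simpa using hK)]
  rw [← coe_partsList, Multiset.map_coe, Multiset.sum_coe,
    ← key _ K (by rwa [length_partsList]), ← Finset.Ico_add_one_right_eq_Icc,
    sum_Ico_eq_sum_range]
  simp only [rowLen, Nat.add_sub_cancel_left, Nat.add_sub_cancel]

theorem colLen_eq_card_filter {b : ℕ} (hb : 1 ≤ b) {K : ℕ} (hK : Multiset.card π.parts ≤ K) :
    colLen π b = #{a ∈ Icc 1 K | b ≤ rowLen π a} := by
  have h := sum_Icc_rowLen π (f := fun v => if b ≤ v then 1 else 0) (by simp; omega) hK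
  rw [colLen, Multiset.card_filter_eq_sum_map_ite, ← h, card_filter]

theorem colLen_le (b : ℕ) : colLen π b ≤ Multiset.card π.parts :=
  Multiset.card_le_card (Multiset.filter_le _ _)

theorem colLen_eq_zero_of_lt {b : ℕ} (hb : N < b) : colLen π b = 0 := by
  rw [colLen, Multiset.card_eq_zero, Multiset.filter_eq_nil]
  exact fun v hv => by have := Nat.Partition.le_of_mem_parts hv; omega

theorem le_rowLen_iff_le_colLen {a b : ℕ} (ha : 1 ≤ a) (hb : 1 ≤ b) :
    b ≤ rowLen π a ↔ a ≤ colLen π b := by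
  rw [colLen_eq_card_filter π hb le_rfl]
  constructor
  · intro h
    have haK : a ≤ Multiset.card π.parts := by
      by_contra! h'
      rw [rowLen_eq_zero_of_card_lt π h'] at h
      omega
    calc a = #(Icc 1 a) := by simp
    _ ≤ _ := card_le_card fun t ht => by
      simp only [mem_Icc, mem_filter] at ht ⊢
      exact ⟨⟨ht.1, ht.2.trans haK⟩, h.trans (rowLen_antitone π ht.2)⟩
  · intro h
    by_contra! h'
    have hsub : {t ∈ Icc 1 (Multiset.card π.parts) | b ≤ rowLen π t} ⊆ Icc 1 (a - 1) :=
      fun t ht => by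
        simp only [mem_Icc, mem_filter] at ht ⊢
        refine ⟨ht.1.1, ?_⟩
        by_contra! hta
        have := rowLen_antitone π (show a ≤ t by omega)
        omega
    have := card_le_card hsub
    simp only [Nat.card_Icc] at this
    omega

theorem sum_rowLen_eq {K : ℕ} (hK : Multiset.card π.parts ≤ K) :
    ∑ a ∈ Icc 1 K, rowLen π a = N := by
  simpa [π.parts_sum] using sum_Icc_rowLen π (f := id) rfl hK

theorem numOdd_eq_sum {K : ℕ} (hK : Multiset.card π.parts ≤ K) :
    numOdd π = ∑ a ∈ Icc 1 K, rowLen π a % 2 := by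
  rw [sum_Icc_rowLen π (f := (· % 2)) rfl hK, numOdd, Multiset.card_filter_eq_sum_map_ite]
  congr 1
  exact Multiset.map_congr rfl fun v _ => by simp only [Nat.odd_iff]; split_ifs <;> omega

theorem numOddConj_eq_sum {K : ℕ} (hK : N ≤ K) :
    numOddConj π = ∑ b ∈ Icc 1 K, colLen π b % 2 := by
  rw [numOddConj, card_filter]
  refine (sum_congr rfl fun b _ => ?_).trans
    (sum_subset (Icc_subset_Icc_right hK) fun b hb hbN => ?_)
  · simp only [Nat.odd_iff]; split_ifs <;> omega
  · simp only [mem_Icc] at hb hbN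
    rw [colLen_eq_zero_of_lt π (by omega), Nat.zero_mod]

theorem sum_sum_rowLen_eq_sum_sum_colLen {M : Type*} [AddCommMonoid M] {K : ℕ} (hK : N ≤ K)
    (g : ℕ → ℕ → M) :
    ∑ a ∈ Icc 1 K, ∑ b ∈ Icc 1 (rowLen π a), g a b
      = ∑ b ∈ Icc 1 K, ∑ a ∈ Icc 1 (colLen π b), g a b := by
  refine sum_comm' fun a b => ?_
  simp only [mem_Icc]
  have := rowLen_le π a
  have := (colLen_le π b).trans (card_parts_le π)
  constructor
  · rintro ⟨ha, hb⟩
    exact ⟨⟨ha.1, (le_rowLen_iff_le_colLen π ha.1 hb.1).mp hb.2⟩, hb.1, by omega⟩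
  · rintro ⟨ha, hb⟩
    exact ⟨⟨ha.1, by omega⟩, hb.1, (le_rowLen_iff_le_colLen π ha.1 hb.1).mpr ha.2⟩

theorem srank_eq_sum {K : ℕ} (hK : N ≤ K) :
    srank π = ∑ a ∈ Icc 1 K, ((-1 : ℤ) ^ a * rowLen π a + (rowLen π a % 2 : ℕ)) := by
  have hparts : Multiset.card π.parts ≤ K := (card_parts_le π).trans hK
  calc srank π
      = ∑ a ∈ Icc 1 K, ((rowLen π a % 2 : ℕ) : ℤ)
          - ∑ b ∈ Icc 1 K, ((colLen π b % 2 : ℕ) : ℤ) := by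
        rw [srank, numOdd_eq_sum π hparts, numOddConj_eq_sum π hK]
        push_cast
        rfl
    _ = ∑ a ∈ Icc 1 K, ∑ b ∈ Icc 1 (rowLen π a), ((-1 : ℤ) ^ (b + 1) - (-1) ^ (a + 1)) := by
        simp only [← sum_Icc_neg_one_pow_succ, sum_sub_distrib,
          sum_sum_rowLen_eq_sum_sum_colLen π hK fun a _ => (-1 : ℤ) ^ (a + 1)]
    _ = _ := sum_congr rfl fun a _ => by
        rw [sum_sub_distrib, sum_Icc_neg_one_pow_succ, sum_const, Nat.card_Icc, pow_succ]
        simp only [Nat.add_sub_cancel, nsmul_eq_mul]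
        ring

def betaSet (K : ℕ) : Finset ℕ := (Icc 1 K).image fun a => rowLen π a + (K - a)

theorem betaSet_injOn (K : ℕ) : Set.InjOn (fun a => rowLen π a + (K - a)) (Icc 1 K) := by
  intro a ha a' ha' h
  simp only [coe_Icc, Set.mem_Icc] at ha ha' h
  rcases le_total a a' with haa' | haa'
  · have := rowLen_antitone π haa'; omega
  · have := rowLen_antitone π haa'; omega

theorem card_betaSet (K : ℕ) : #(betaSet π K) = K := by
  rw [betaSet, card_image_of_injOn (betaSet_injOn π K), Nat.card_Icc, Nat.add_sub_cancel]

theorem card_filter_betaSet (K : ℕ) (p : ℕ → Prop) [DecidablePred p] :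
    #{v ∈ betaSet π K | p v} = #{a ∈ Icc 1 K | p (rowLen π a + (K - a))} := by
  rw [betaSet, filter_image,
    card_image_of_injOn ((betaSet_injOn π K).mono (filter_subset _ _))]

theorem IsCore.sub_mem_betaSet {t : ℕ} (hπ : IsCore t π) {K : ℕ}
    (hK : Multiset.card π.parts ≤ K) {v : ℕ} (hv : v ∈ betaSet π K) (htv : t ≤ v) :
    v - t ∈ betaSet π K := by
  by_contra hw
  obtain ⟨a, ha, rfl⟩ := mem_image.mp hv
  rw [mem_Icc] at ha
  obtain ⟨w, hw_def⟩ : ∃ w, w = rowLen π a + (K - a) - t := ⟨_, rfl⟩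
  rw [← hw_def] at hw
  have ht : 0 < t := Nat.pos_of_ne_zero fun h => hw (by simpa [hw_def, h] using hv)
  -- `a'` is the last row whose beta-number exceeds the gap `w`; the hook of length `t`
  -- has its corner in row `a` and in a column of length `a'`.
  obtain ⟨a', ha'⟩ : ∃ a', Nat.findGreatest (fun s => w < rowLen π s + (K - s)) K = a' :=
    ⟨_, rfl⟩
  have hwa : w < rowLen π a + (K - a) := by omega
  have haa' : a ≤ a' := ha' ▸ Nat.le_findGreatest ha.2 hwa
  have ha'K : a' ≤ K := ha' ▸ Nat.findGreatest_le K
  have hwa' : w < rowLen π a' + (K - a') :=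
    ha' ▸ Nat.findGreatest_spec (P := fun s => w < rowLen π s + (K - s)) ha.2 hwa
  have hnext : a' < K → rowLen π (a' + 1) + (K - (a' + 1)) < w := fun h => by
    have hle : ¬w < rowLen π (a' + 1) + (K - (a' + 1)) :=
      Nat.findGreatest_is_greatest (P := fun s => w < rowLen π s + (K - s)) (by omega) h
    have hne : rowLen π (a' + 1) + (K - (a' + 1)) ≠ w := fun he =>
      hw (mem_image.mpr ⟨a' + 1, mem_Icc.mpr ⟨by omega, h⟩, he⟩)
    omega
  obtain ⟨b, hb_def⟩ : ∃ b, b = w + a' + 1 - K := ⟨_, rfl⟩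
  have hb : 1 ≤ b := by
    rcases ha'K.lt_or_eq with h | h
    · have := hnext h; omega
    · omega
  have hcol : colLen π b = a' := by
    refine le_antisymm ?_ ((le_rowLen_iff_le_colLen π (by omega) hb).mp (by omega))
    by_contra! h
    have hb' : b ≤ rowLen π (a' + 1) := (le_rowLen_iff_le_colLen π (by omega) hb).mpr h
    rcases ha'K.lt_or_eq with h' | h'
    · have := hnext h'; omega
    · rw [rowLen_eq_zero_of_card_lt π (by omega)] at hb'; omega
  have hba : b ≤ rowLen π a := by have := rowLen_antitone π haa'; omega
  refine hπ a b ha.1 hb hba ?_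
  rw [hookLen, hcol]
  omega

theorem IsCore.card_filter_even_betaSet_bounds (hπ : IsCore 5 π) {K : ℕ}
    (hK : Multiset.card π.parts ≤ K) :
    2 * #{v ∈ betaSet π K | Even v} ≤ K + 3 ∧ K ≤ 2 * #{v ∈ betaSet π K | Even v} + 2 := by
  have := card_filter_even_bounds_of_sub_five_mem fun v hv h5 => hπ.sub_mem_betaSet π hK hv h5
  rwa [card_betaSet] at this

theorem srank_modEq {k : ℕ} (hk : N ≤ 2 * k) :
    srank π ≡ N + k - #{v ∈ betaSet π (2 * k) | Even v} [ZMOD 4] := by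
  have hrows : (N + k - #{v ∈ betaSet π (2 * k) | Even v} : ℤ)
      = ∑ a ∈ Icc 1 (2 * k), ((rowLen π a : ℤ) + (if Even a then 1 else 0)
          - (if Even (rowLen π a + (2 * k - a)) then 1 else 0)) := by
    rw [sum_sub_distrib, sum_add_distrib, sum_boole, sum_boole, ← Nat.cast_sum,
      sum_rowLen_eq π ((card_parts_le π).trans hk), card_filter_even_Icc_two_mul,
      card_filter_betaSet]
  rw [srank_eq_sum π hk, hrows]
  exact Int.ModEq.sum fun a ha =>
    neg_one_pow_mul_add_mod_two_modEq (even_two_mul k) (mem_Icc.mp ha).2 _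

end Diagram

/-- `a_{5,0}(4n+2) = 0`. -/
theorem fivecore_srank_zero_mod_four_two (n : ℕ) : a5srank 0 (4 * n + 2) = 0 := by
  rw [a5srank, card_eq_zero, filter_eq_empty_iff]
  rintro π - ⟨hcore, hsrank⟩
  have hmod := srank_modEq π (k := 4 * n + 2) (by omega)
  have hbounds := hcore.card_filter_even_betaSet_bounds π (K := 2 * (4 * n + 2))
    ((card_parts_le π).trans (by omega))
  rw [Int.ModEq] at hmod
  push_cast at hmod
  omega

end AndrewsStanley
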